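/- Let l ≥ 1 be an integer, let P̃, Q̃ ∈ ℂ[z,z⁻¹] be Laurent polynomials, and let R ∈ ℂ[z,z⁻¹] be a Laurent polynomial whose coefficient of z^{jl} is zero for every integer j. Set P(z) = P̃(z^l) and Q(z) = Q̃(z^l) + R(z). Then ∮_{|z|=1} P(z)^k Q'(z) dz = 0 for every integer k ≥ 0 if and only if ∮_{|z|=1} P̃(z)^k Q̃'(z) dz = 0 for every integer k ≥ 0. -/

import Mathlib

/-!
On the unit circle the substitution `w = z ^ l` covers the circle `l` times, so
`∮ z ^ (l - 1) * h (z ^ l) dz = ∮ h w dw`, while for `l ∤ j` the rotation `z ↦ e^{2πi/l} z`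
multiplies `∮ z ^ (j - 1) * h (z ^ l) dz` by `e^{2πij/l} ≠ 1`, so that integral vanishes.
By the chain rule `P ^ k * Q' = l * z ^ (l - 1) * (P̃ ^ k * Q̃')(z ^ l) + P̃(z ^ l) ^ k * R'`,
and `R'` only has exponents `j - 1` with `l ∤ j`; hence every moment of `(P, Q)` is `l` times the
corresponding moment of `(P̃, Q̃)`.
-/

open Complex Metric Set Function MeasureTheory Real Topology

namespace Function.Periodic

theorem intervalIntegral_comp_natCast_mul {E : Type*} [NormedAddCommGroup E] [NormedSpace ℝ E]
    {f : ℝ → E} {T : ℝ} (hf : Periodic f T)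
    (h_int : ∀ t₁ t₂, IntervalIntegrable f volume t₁ t₂) {n : ℕ} (hn : n ≠ 0) :
    ∫ x in 0..T, f (n * x) = ∫ x in 0..T, f x := by
  have hn' : (n : ℝ) ≠ 0 := Nat.cast_ne_zero.2 hn
  have h := hf.intervalIntegral_add_zsmul_eq n 0 h_int
  simp only [zero_add, natCast_zsmul, nsmul_eq_mul] at h
  rw [intervalIntegral.integral_comp_mul_left f hn', mul_zero, h, ← Nat.cast_smul_eq_nsmul ℝ,
    smul_smul, inv_mul_cancel₀ hn', one_smul]

theorem intervalIntegral_eq_zero_of_add_eq_mul {f : ℝ → ℂ} {T c : ℝ} {w : ℂ}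
    (hf : Periodic f T) (hfc : ∀ x, f (x + c) = w * f x) (hw : w ≠ 1) :
    ∫ x in 0..T, f x = 0 := by
  have h : ∫ x in 0..T, f x = w * ∫ x in 0..T, f x := calc
    ∫ x in 0..T, f x = ∫ x in c..c + T, f x := by simpa using hf.intervalIntegral_add_eq 0 c
    _ = ∫ x in 0..T, f (x + c) := by
      rw [intervalIntegral.integral_comp_add_right, zero_add, add_comm]
    _ = w * ∫ x in 0..T, f x := by simp only [hfc, intervalIntegral.integral_const_mul]
  have h' : (1 - w) * ∫ x in 0..T, f x = 0 := by rw [sub_mul, one_mul, ← h, sub_self]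
  exact (mul_eq_zero.1 h').resolve_left (sub_ne_zero.2 hw.symm)

end Function.Periodic

theorem mapsTo_pow_sphere_zero_one (l : ℕ) :
    MapsTo (· ^ l) (sphere (0 : ℂ) 1) (sphere (0 : ℂ) 1) := fun z hz => by
  simp_all [norm_pow]

theorem Metric.sphere_subset_compl_singleton {α : Type*} [PseudoMetricSpace α] {x : α} {ε : ℝ}
    (hε : ε ≠ 0) : sphere x ε ⊆ {x}ᶜ := fun _ hy => ne_of_mem_sphere hy hε

theorem circleIntegral_pow_mul_comp_pow {f : ℂ → ℂ} (hf : ContinuousOn f (sphere 0 1))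
    {l : ℕ} (hl : l ≠ 0) :
    ∮ z in C(0, 1), z ^ (l - 1) * f (z ^ l) = ∮ z in C(0, 1), f z := by
  set G : ℝ → ℂ := fun θ => deriv (circleMap 0 1) θ • f (circleMap 0 1 θ)
  have hG : Continuous G := by
    simp only [G, deriv_circleMap]
    exact ((continuous_circleMap 0 1).mul continuous_const).smul
      (hf.comp_continuous (continuous_circleMap 0 1) (circleMap_mem_sphere 0 zero_le_one))
  have hGper : Periodic G (2 * π) := fun θ => by
    simp only [G, deriv_circleMap, periodic_circleMap 0 1 θ]
  have hcomp (θ : ℝ) : deriv (circleMap 0 1) θ • (circleMap 0 1 θ ^ (l - 1) *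
      f (circleMap 0 1 θ ^ l)) = G (l * θ) := by
    have hpow : circleMap 0 1 θ ^ l = circleMap 0 1 θ * circleMap 0 1 θ ^ (l - 1) := by
      rw [← pow_succ', Nat.sub_add_cancel (Nat.one_le_iff_ne_zero.2 hl)]
    have hlθ : circleMap 0 1 (l * θ) = circleMap 0 1 θ ^ l := by
      rw [circleMap_zero_pow, one_pow]
    simp only [G, deriv_circleMap, smul_eq_mul, hlθ]
    linear_combination (-I * f (circleMap 0 1 θ ^ l)) * hpow
  simp only [circleIntegral, hcomp]
  exact hGper.intervalIntegral_comp_natCast_mul (hG.intervalIntegrable) hl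

theorem circleIntegral_zpow_mul_comp_pow_eq_zero (f : ℂ → ℂ) {l : ℕ} (hl : l ≠ 0) {j : ℤ}
    (hj : ¬ (l : ℤ) ∣ j) :
    ∮ z in C(0, 1), z ^ (j - 1) * f (z ^ l) = 0 := by
  set ζ := circleMap 0 1 (2 * π / l)
  have hζ : IsPrimitiveRoot ζ l := by
    convert Complex.isPrimitiveRoot_exp l hl using 1
    simp only [ζ, circleMap_zero]
    push_cast
    ring_nf
  have hζ0 : ζ ≠ 0 := hζ.ne_zero hl
  refine Periodic.intervalIntegral_eq_zero_of_add_eq_mul (c := 2 * π / l) (w := ζ ^ j)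
    (fun θ => by simp only [deriv_circleMap, periodic_circleMap 0 1 θ])
    (fun θ => ?_)
    (fun h => hj ((hζ.zpow_eq_one_iff_dvd j).1 h))
  have hrot : circleMap 0 1 (θ + 2 * π / l) = circleMap 0 1 θ * ζ := by
    rw [circleMap_zero_mul, one_mul]
  simp only [deriv_circleMap, hrot, smul_eq_mul, mul_pow, hζ.pow_eq_one, mul_one, mul_zpow,
    zpow_sub_one₀ hζ0]
  field_simp

theorem differentiableOn_laurent (s : Finset ℤ) (a : ℤ → ℂ) :
    DifferentiableOn ℂ (fun z : ℂ => ∑ k ∈ s, a k * z ^ k) {0}ᶜ := fun _ hz =>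
  (DifferentiableAt.fun_sum fun k _ =>
    (differentiableAt_zpow.2 (Or.inl hz)).const_mul (a k)).differentiableWithinAt

theorem deriv_laurent (s : Finset ℤ) (a : ℤ → ℂ) {z : ℂ} (hz : z ≠ 0) :
    deriv (fun z : ℂ => ∑ k ∈ s, a k * z ^ k) z = ∑ k ∈ s, a k * k * z ^ (k - 1) := by
  rw [deriv_fun_sum fun k _ => (differentiableAt_zpow.2 (Or.inl hz)).const_mul (a k)]
  refine Finset.sum_congr rfl fun k _ => ?_
  rw [deriv_const_mul _ (differentiableAt_zpow.2 (Or.inl hz)), deriv_zpow, mul_assoc]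

theorem continuousOn_comp_pow_mul_deriv {f F : ℂ → ℂ} (hf : ContinuousOn f (sphere 0 1))
    (hF : DifferentiableOn ℂ F {0}ᶜ) (l : ℕ) :
    ContinuousOn (fun z => f (z ^ l) * deriv F z) (sphere 0 1) :=
  (hf.comp (continuous_pow l).continuousOn (mapsTo_pow_sphere_zero_one l)).mul
    ((hF.deriv isOpen_compl_singleton).continuousOn.mono
      (sphere_subset_compl_singleton one_ne_zero))

theorem circleIntegral_comp_pow_mul_deriv_comp_pow {f g : ℂ → ℂ}
    (hf : ContinuousOn f (sphere 0 1)) (hg : DifferentiableOn ℂ g {0}ᶜ) {l : ℕ} (hl : l ≠ 0) :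
    ∮ z in C(0, 1), f (z ^ l) * deriv (fun z => g (z ^ l)) z =
      l * ∮ z in C(0, 1), f z * deriv g z := by
  have hfg : ContinuousOn (fun w => f w * deriv g w) (sphere 0 1) :=
    hf.mul ((hg.deriv isOpen_compl_singleton).continuousOn.mono
      (sphere_subset_compl_singleton one_ne_zero))
  rw [← circleIntegral_pow_mul_comp_pow hfg hl, ← circleIntegral.integral_const_mul]
  refine circleIntegral.integral_congr zero_le_one fun z hz => ?_
  have hzl : z ^ l ≠ 0 := pow_ne_zero l (sphere_subset_compl_singleton one_ne_zero hz)
  have hgz : DifferentiableAt ℂ g (z ^ l) :=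
    hg.differentiableAt (isOpen_compl_singleton.mem_nhds hzl)
  rw [← comp_def g, deriv_comp (h := fun w : ℂ => w ^ l) z hgz (differentiableAt_pow l),
    deriv_pow_field]
  ring

theorem circleIntegral_comp_pow_mul_deriv_laurent_eq_zero {f : ℂ → ℂ}
    (hf : ContinuousOn f (sphere 0 1)) {l : ℕ} (hl : l ≠ 0) (s : Finset ℤ) {c : ℤ → ℂ}
    (hc : ∀ k : ℤ, (l : ℤ) ∣ k → c k = 0) :
    ∮ z in C(0, 1), f (z ^ l) * deriv (fun z : ℂ => ∑ k ∈ s, c k * z ^ k) z = 0 := by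
  have hfl : ContinuousOn (fun z => f (z ^ l)) (sphere 0 1) :=
    hf.comp (continuous_pow l).continuousOn (mapsTo_pow_sphere_zero_one l)
  calc ∮ z in C(0, 1), f (z ^ l) * deriv (fun z : ℂ => ∑ k ∈ s, c k * z ^ k) z
      = ∮ z in C(0, 1), ∑ k ∈ s, c k * k * (z ^ (k - 1) * f (z ^ l)) := by
        refine circleIntegral.integral_congr zero_le_one fun z hz => ?_
        simp only [deriv_laurent s c (sphere_subset_compl_singleton one_ne_zero hz),
          Finset.mul_sum]
        exact Finset.sum_congr rfl fun k _ => by ring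
    _ = ∑ k ∈ s, c k * k * ∮ z in C(0, 1), z ^ (k - 1) * f (z ^ l) := by
        rw [circleIntegral.integral_fun_sum fun k _ => ?_]
        · simp only [circleIntegral.integral_const_mul]
        refine ContinuousOn.circleIntegrable zero_le_one
          (continuousOn_const.mul (ContinuousOn.mul ?_ hfl))
        exact (continuousOn_zpow₀ _).mono (sphere_subset_compl_singleton one_ne_zero)
    _ = 0 := Finset.sum_eq_zero fun k _ => by
        by_cases hk : (l : ℤ) ∣ k
        · rw [hc k hk, zero_mul, zero_mul]
        · rw [circleIntegral_zpow_mul_comp_pow_eq_zero f hl hk, mul_zero]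

theorem circleIntegral_comp_pow_mul_deriv_comp_pow_add_laurent {f g : ℂ → ℂ}
    (hf : ContinuousOn f (sphere 0 1)) (hg : DifferentiableOn ℂ g {0}ᶜ) {l : ℕ} (hl : l ≠ 0)
    (s : Finset ℤ) {c : ℤ → ℂ} (hc : ∀ k : ℤ, (l : ℤ) ∣ k → c k = 0) :
    ∮ z in C(0, 1), f (z ^ l) * deriv (fun z => g (z ^ l) + ∑ k ∈ s, c k * z ^ k) z =
      l * ∮ z in C(0, 1), f z * deriv g z := by
  have hgl : DifferentiableOn ℂ (fun z => g (z ^ l)) {0}ᶜ :=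
    hg.comp (differentiable_pow l).differentiableOn fun z hz => pow_ne_zero l hz
  have hR := differentiableOn_laurent s c
  have hsplit : EqOn (fun z => f (z ^ l) * deriv (fun z => g (z ^ l) + ∑ k ∈ s, c k * z ^ k) z)
      (fun z => f (z ^ l) * deriv (fun z => g (z ^ l)) z +
        f (z ^ l) * deriv (fun z : ℂ => ∑ k ∈ s, c k * z ^ k) z) (sphere 0 1) := fun z hz => by
    have hz : {(0 : ℂ)}ᶜ ∈ 𝓝 z :=
      isOpen_compl_singleton.mem_nhds (sphere_subset_compl_singleton one_ne_zero hz)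
    simp only [deriv_fun_add (hgl.differentiableAt hz) (hR.differentiableAt hz), mul_add]
  rw [circleIntegral.integral_congr zero_le_one hsplit, circleIntegral.integral_add
    ((continuousOn_comp_pow_mul_deriv hf hgl l).circleIntegrable zero_le_one)
    ((continuousOn_comp_pow_mul_deriv hf hR l).circleIntegrable zero_le_one),
    circleIntegral_comp_pow_mul_deriv_comp_pow hf hg hl,
    circleIntegral_comp_pow_mul_deriv_laurent_eq_zero hf hl s hc, add_zero]

/-- Proposition on reduction for `P(z) = P̃(z^l)`.
Let `P̃, Q̃` be Laurent polynomials, and `R` a Laurent polynomial all of whose coefficients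
at exponents divisible by `l` vanish.  Set `P(z) = P̃(z^l)` and `Q(z) = Q̃(z^l) + R(z)`.
Then all moments `∮_{|z|=1} P^k dQ` vanish if and only if all moments
`∮_{|z|=1} P̃^k dQ̃` vanish. -/
theorem moment_reduction_power
    (l : ℕ) (hl : 1 ≤ l)
    (sP sQ sR : Finset ℤ) (a b c : ℤ → ℂ)
    (hc : ∀ k : ℤ, (l : ℤ) ∣ k → c k = 0)
    (P Q : ℂ → ℂ)
    (hP : P = fun z => ∑ k ∈ sP, a k * z ^ ((l : ℤ) * k))
    (hQ : Q = fun z => (∑ k ∈ sQ, b k * z ^ ((l : ℤ) * k)) + ∑ k ∈ sR, c k * z ^ k)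
    (Pt Qt : ℂ → ℂ)
    (hPt : Pt = fun z => ∑ k ∈ sP, a k * z ^ k)
    (hQt : Qt = fun z => ∑ k ∈ sQ, b k * z ^ k) :
    (∀ k : ℕ, (∮ z in C(0, 1), P z ^ k * deriv Q z) = 0) ↔
    (∀ k : ℕ, (∮ z in C(0, 1), Pt z ^ k * deriv Qt z) = 0) := by
  have hl0 : l ≠ 0 := Nat.one_le_iff_ne_zero.1 hl
  have hPPt : P = fun z => Pt (z ^ l) := by simp only [hP, hPt, zpow_mul, zpow_natCast]
  have hQQt : Q = fun z => Qt (z ^ l) + ∑ k ∈ sR, c k * z ^ k := by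
    simp only [hQ, hQt, zpow_mul, zpow_natCast]
  have hPtc : ContinuousOn Pt (sphere 0 1) :=
    hPt ▸ (differentiableOn_laurent sP a).continuousOn.mono
      (sphere_subset_compl_singleton one_ne_zero)
  have hmoment (k : ℕ) :
      ∮ z in C(0, 1), P z ^ k * deriv Q z = l * ∮ z in C(0, 1), Pt z ^ k * deriv Qt z := by
    rw [hPPt, hQQt]
    exact circleIntegral_comp_pow_mul_deriv_comp_pow_add_laurent (f := fun w => Pt w ^ k)
      (hPtc.pow k) (hQt ▸ differentiableOn_laurent sQ b) hl0 sR hc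
  simp only [hmoment, mul_eq_zero, Nat.cast_eq_zero, hl0, false_or]
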